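/- arXiv:2210.06549 — 3 statements merged into one kernel-verified Lean document; each statement's English description precedes it below -/
import Mathlib

section
/- Consider a many-to-many matching market (F, W, ≻) in which every agent's preference relation is a strict linear order over subsets of the other side that is substitutable and satisfies the law of aggregate demand (LAD). Then every agent is matched with the same number of partners in every stable matching: for every agent a and any two stable matchings μ and μ', |μ(a)| = |μ'(a)|. -/
/-!
Common framework for many-to-many matching markets (Manasero–Oviedo,
"General Manipulability Theorem for a Matching Model").

Agents on each side have strict linear orders (strict total orders) over
finsets of the other side.  `Pref.Ch` is the choice function, selecting the
most preferred subset.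
-/

/-- A strict preference of an agent over subsets of the (finite) set `α` of
potential partners: a strict total order on `Finset α`, where `gt S T` means
`S` is strictly preferred to `T`. -/
structure Pref (α : Type*) [DecidableEq α] [Fintype α] where
  gt : Finset α → Finset α → Prop
  isSTO : IsStrictTotalOrder (Finset α) gt

namespace Pref

variable {α : Type*} [DecidableEq α] [Fintype α]

/-- The choice set `Ch(S, ≻)`: the `≻`-maximal subset of `S`. -/
noncomputable def Ch (p : Pref α) (S : Finset α) : Finset α := by
  classical
  haveI := p.isSTO
  haveI : IsStrictTotalOrder (Finset α) (Function.swap p.gt) := IsStrictTotalOrder.swap _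
  exact @Finset.max' _ (linearOrderOfSTO (Function.swap p.gt)) S.powerset
    ⟨∅, Finset.empty_mem_powerset S⟩

/-- Substitutability: if `w ∈ Ch(S)` then `w ∈ Ch(S \ {w'})` for any other `w' ∈ S`. -/
def Substitutable (p : Pref α) : Prop :=
  ∀ (S : Finset α) (w w' : α), w ∈ S → w' ∈ S → w ≠ w' →
    w ∈ p.Ch S → w ∈ p.Ch (S.erase w')

/-- Law of aggregate demand: `Y ⊆ X` implies `|Ch(Y)| ≤ |Ch(X)|`. -/
def LAD (p : Pref α) : Prop :=
  ∀ Y X : Finset α, Y ⊆ X → (p.Ch Y).card ≤ (p.Ch X).card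

/-- `p.HasList L` : the sets in `L` are exactly the acceptable sets, in strictly
decreasing order of preference and all preferred to `∅`; any set not in the
list (other than `∅`) is unacceptable, i.e. worse than `∅`. -/
def HasList (p : Pref α) (L : List (Finset α)) : Prop :=
  List.Chain' p.gt (L ++ [∅]) ∧ ∀ S : Finset α, S ∉ L → S ≠ ∅ → p.gt ∅ S

/-- `q`-separability of a preference with quota `q`. -/
def QSeparable (p : Pref α) (q : ℕ) : Prop :=
  (∀ S : Finset α, q < S.card → p.gt ∅ S) ∧
  (∀ (S : Finset α) (v : α), v ∉ S → S.card < q → (p.gt (insert v S) S ↔ p.gt {v} ∅))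

end Pref

/-- `p'` is the restriction `p |_T` of `p` to `T`:
(i) any set not contained in `T` is worse than `∅`;
(ii) for `S ⊆ T`, `S ≻' ∅ ↔ S ≻ ∅`;
(iii) for `S, S' ⊆ T`, `S ≻' S' ↔ S ≻ S'`. -/
def IsRestriction {α : Type*} [DecidableEq α] [Fintype α]
    (p : Pref α) (T : Finset α) (p' : Pref α) : Prop :=
  (∀ S : Finset α, ¬ S ⊆ T → p'.gt ∅ S) ∧
  (∀ S : Finset α, S ⊆ T → (p'.gt S ∅ ↔ p.gt S ∅)) ∧
  (∀ S S' : Finset α, S ⊆ T → S' ⊆ T → (p'.gt S S' ↔ p.gt S S'))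

variable (F W : Type*) [DecidableEq F] [Fintype F] [DecidableEq W] [Fintype W]

/-- A (many-to-many) matching between firms `F` and workers `W`. -/
structure Matching where
  fm : F → Finset W
  wm : W → Finset F
  compat : ∀ f w, w ∈ fm f ↔ f ∈ wm w

/-- A preference profile: one preference for each firm and each worker. -/
structure Profile where
  fp : F → Pref W
  wp : W → Pref F

variable {F W}

/-- All agents' preferences are substitutable. -/
def Profile.Substitutable (P : Profile F W) : Prop :=
  (∀ f, (P.fp f).Substitutable) ∧ (∀ w, (P.wp w).Substitutable)

/-- All agents' preferences satisfy the law of aggregate demand. -/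
def Profile.LAD (P : Profile F W) : Prop :=
  (∀ f, (P.fp f).LAD) ∧ (∀ w, (P.wp w).LAD)

/-- The profile obtained from `P` by replacing firm `f`'s preference by `p`. -/
def Profile.updateFirm (P : Profile F W) (f : F) (p : Pref W) : Profile F W :=
  ⟨Function.update P.fp f p, P.wp⟩

/-- The profile obtained from `P` by replacing worker `w`'s preference by `p`. -/
def Profile.updateWorker (P : Profile F W) (w : W) (p : Pref F) : Profile F W :=
  ⟨P.fp, Function.update P.wp w p⟩

/-- Individual rationality: every agent chooses its whole assignment. -/
def IndRational (P : Profile F W) (μ : Matching F W) : Prop :=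
  (∀ f, (P.fp f).Ch (μ.fm f) = μ.fm f) ∧ (∀ w, (P.wp w).Ch (μ.wm w) = μ.wm w)

/-- The pair `(w, f)` blocks the matching `μ`. -/
def Blocks (P : Profile F W) (μ : Matching F W) (w : W) (f : F) : Prop :=
  w ∉ μ.fm f ∧ w ∈ (P.fp f).Ch (insert w (μ.fm f)) ∧ f ∈ (P.wp w).Ch (insert f (μ.wm w))

/-- (Pairwise) stability. -/
def Stable (P : Profile F W) (μ : Matching F W) : Prop :=
  IndRational P μ ∧ ∀ w f, ¬ Blocks P μ w f

/-- `μF` is the firm-optimal stable matching for `P`. -/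
def FirmOptimal (P : Profile F W) (μF : Matching F W) : Prop :=
  Stable P μF ∧ ∀ μ, Stable P μ → ∀ f, μF.fm f = μ.fm f ∨ (P.fp f).gt (μF.fm f) (μ.fm f)

/-- `μW` is the worker-optimal stable matching for `P`. -/
def WorkerOptimal (P : Profile F W) (μW : Matching F W) : Prop :=
  Stable P μW ∧ ∀ μ, Stable P μ → ∀ w, μW.wm w = μ.wm w ∨ (P.wp w).gt (μW.wm w) (μ.wm w)

/-- Firm `f` satisfies the manipulability property (w.r.t. the rule `h`, the true
profile `P` and the firm-optimal stable matching `μF`): if `h(≻)(f) ≠ μF(≻)(f)`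
then some report `≻'_f` (in the domain: substitutable and LAD) gives `f` a
strictly `≻_f`-better assignment. -/
def FirmManip (h : Profile F W → Matching F W) (P : Profile F W)
    (μF : Matching F W) (f : F) : Prop :=
  (h P).fm f ≠ μF.fm f → ∃ p' : Pref W, p'.Substitutable ∧ p'.LAD ∧
    (P.fp f).gt ((h (P.updateFirm f p')).fm f) ((h P).fm f)

/-- Firm `f` satisfies the manipulability property with Blair order. -/
def FirmManipB (h : Profile F W → Matching F W) (P : Profile F W)
    (μF : Matching F W) (f : F) : Prop :=
  (h P).fm f ≠ μF.fm f → ∃ p' : Pref W, p'.Substitutable ∧ p'.LAD ∧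
    ((P.fp f).Ch ((h (P.updateFirm f p')).fm f ∪ (h P).fm f) = (h (P.updateFirm f p')).fm f ∧
      (h (P.updateFirm f p')).fm f ≠ (h P).fm f)

/-- Worker `w` satisfies the manipulability property. -/
def WorkerManip (h : Profile F W → Matching F W) (P : Profile F W)
    (μW : Matching F W) (w : W) : Prop :=
  (h P).wm w ≠ μW.wm w → ∃ p' : Pref F, p'.Substitutable ∧ p'.LAD ∧
    (P.wp w).gt ((h (P.updateWorker w p')).wm w) ((h P).wm w)

/-- Worker `w` satisfies the manipulability property with Blair order. -/
def WorkerManipB (h : Profile F W → Matching F W) (P : Profile F W)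
    (μW : Matching F W) (w : W) : Prop :=
  (h P).wm w ≠ μW.wm w → ∃ p' : Pref F, p'.Substitutable ∧ p'.LAD ∧
    ((P.wp w).Ch ((h (P.updateWorker w p')).wm w ∪ (h P).wm w) = (h (P.updateWorker w p')).wm w ∧
      (h (P.updateWorker w p')).wm w ≠ (h P).wm w)


section RHT

variable {α : Type*} [DecidableEq α] [Fintype α]

lemma Pref.Ch_subset (p : Pref α) (S : Finset α) : p.Ch S ⊆ S := by
  classical
  haveI := p.isSTO
  haveI : IsStrictTotalOrder (Finset α) (Function.swap p.gt) := IsStrictTotalOrder.swap _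
  have h := @Finset.max'_mem _ (linearOrderOfSTO (Function.swap p.gt)) S.powerset
    ⟨∅, Finset.empty_mem_powerset S⟩
  exact Finset.mem_powerset.mp h

/-- Iterated substitutability: a chosen element stays chosen in subsets. -/
lemma Pref.mem_Ch_of_subset {p : Pref α} (hp : p.Substitutable) :
    ∀ (n : ℕ) (S T : Finset α), S.card ≤ n → T ⊆ S → ∀ w ∈ T, w ∈ p.Ch S → w ∈ p.Ch T := by
  intro n
  induction n with
  | zero =>
    intro S T hS hTS w hw _
    have : S = ∅ := Finset.card_eq_zero.mp (Nat.le_zero.mp hS)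
    subst this
    exact absurd (hTS hw) (Finset.notMem_empty w)
  | succ n ih =>
    intro S T hS hTS w hw hwS
    by_cases hST : S ⊆ T
    · rwa [Finset.Subset.antisymm hTS hST]
    · obtain ⟨w', hw'S, hw'T⟩ := Finset.not_subset.mp hST
      have hne : w ≠ w' := fun h => hw'T (h ▸ hw)
      have h1 : w ∈ p.Ch (S.erase w') := hp S w w' (hTS hw) hw'S hne hwS
      have hcard : (S.erase w').card ≤ n := by
        have := Finset.card_erase_of_mem hw'S
        omega
      exact ih (S.erase w') T hcard
        (fun x hx => Finset.mem_erase.mpr ⟨fun h => hw'T (h ▸ hx), hTS hx⟩) w hw h1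

end RHT


lemma rht_ite_one_le {c : Prop} [Decidable c] : (if c then (1:ℕ) else 0) ≤ 1 := by
  split <;> omega

lemma rht_card_eq_sum_ite {β : Type*} [Fintype β] [DecidableEq β] (s : Finset β) :
    s.card = ∑ x : β, (if x ∈ s then (1:ℕ) else 0) := by
  classical
  have h := Finset.card_filter (· ∈ s) (Finset.univ : Finset β)
  rwa [Finset.filter_univ_mem] at h

/-- Alkan 2002.  In a many-to-many matching market in which every
agent's preference is substitutable and satisfies the law of aggregate demand,
every agent is matched with the same number of partners in every stable matching. -/
theorem stmt0 {F W : Type*} [DecidableEq F] [Fintype F] [DecidableEq W] [Fintype W]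
    (P : Profile F W) (hsub : P.Substitutable) (hlad : P.LAD)
    (μ μ' : Matching F W) (hμ : Stable P μ) (hμ' : Stable P μ') :
    (∀ f : F, (μ.fm f).card = (μ'.fm f).card) ∧
    (∀ w : W, (μ.wm w).card = (μ'.wm w).card) := by
  classical
  obtain ⟨⟨hIRf, hIRw⟩, hblock⟩ := hμ
  obtain ⟨⟨hIRf', hIRw'⟩, hblock'⟩ := hμ'
  set A : F → Finset W := fun f => (P.fp f).Ch (μ.fm f ∪ μ'.fm f) with hAdef
  set B : W → Finset F := fun w => (P.wp w).Ch (μ.wm w ∪ μ'.wm w) with hBdef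
  have hA1 : ∀ f, (μ.fm f).card ≤ (A f).card := fun f => by
    have h := hlad.1 f (μ.fm f) (μ.fm f ∪ μ'.fm f) Finset.subset_union_left
    rwa [hIRf f] at h
  have hA2 : ∀ f, (μ'.fm f).card ≤ (A f).card := fun f => by
    have h := hlad.1 f (μ'.fm f) (μ.fm f ∪ μ'.fm f) Finset.subset_union_right
    rwa [hIRf' f] at h
  have hB1 : ∀ w, (μ.wm w).card ≤ (B w).card := fun w => by
    have h := hlad.2 w (μ.wm w) (μ.wm w ∪ μ'.wm w) Finset.subset_union_left
    rwa [hIRw w] at h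
  have hB2 : ∀ w, (μ'.wm w).card ≤ (B w).card := fun w => by
    have h := hlad.2 w (μ'.wm w) (μ.wm w ∪ μ'.wm w) Finset.subset_union_right
    rwa [hIRw' w] at h
  have hAsub : ∀ f, A f ⊆ μ.fm f ∪ μ'.fm f := fun f => Pref.Ch_subset _ _
  have hBsub : ∀ w, B w ⊆ μ.wm w ∪ μ'.wm w := fun w => Pref.Ch_subset _ _
  -- key: a pair chosen on both sides is matched in both matchings
  have key : ∀ f w, w ∈ A f → f ∈ B w → w ∈ μ.fm f ∧ w ∈ μ'.fm f := by
    intro f w hwA hfB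
    constructor
    · by_contra hwμ
      have hwμ' : w ∈ μ'.fm f := (Finset.mem_union.mp (hAsub f hwA)).resolve_left hwμ
      have hfμ' : f ∈ μ'.wm w := (μ'.compat f w).mp hwμ'
      have h1 : w ∈ (P.fp f).Ch (insert w (μ.fm f)) :=
        Pref.mem_Ch_of_subset (hsub.1 f) (μ.fm f ∪ μ'.fm f).card _ _ le_rfl
          (Finset.insert_subset (Finset.mem_union_right _ hwμ') Finset.subset_union_left)
          w (Finset.mem_insert_self w _) hwA
      have h2 : f ∈ (P.wp w).Ch (insert f (μ.wm w)) :=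
        Pref.mem_Ch_of_subset (hsub.2 w) (μ.wm w ∪ μ'.wm w).card _ _ le_rfl
          (Finset.insert_subset (Finset.mem_union_right _ hfμ') Finset.subset_union_left)
          f (Finset.mem_insert_self f _) hfB
      exact hblock w f ⟨hwμ, h1, h2⟩
    · by_contra hwμ'
      have hwμ : w ∈ μ.fm f := (Finset.mem_union.mp (hAsub f hwA)).resolve_right hwμ'
      have hfμ : f ∈ μ.wm w := (μ.compat f w).mp hwμ
      have h1 : w ∈ (P.fp f).Ch (insert w (μ'.fm f)) :=
        Pref.mem_Ch_of_subset (hsub.1 f) (μ.fm f ∪ μ'.fm f).card _ _ le_rfl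
          (Finset.insert_subset (Finset.mem_union_left _ hwμ) Finset.subset_union_right)
          w (Finset.mem_insert_self w _) hwA
      have h2 : f ∈ (P.wp w).Ch (insert f (μ'.wm w)) :=
        Pref.mem_Ch_of_subset (hsub.2 w) (μ.wm w ∪ μ'.wm w).card _ _ le_rfl
          (Finset.insert_subset (Finset.mem_union_left _ hfμ) Finset.subset_union_right)
          f (Finset.mem_insert_self f _) hfB
      exact hblock' w f ⟨hwμ', h1, h2⟩
  -- pointwise inequality
  have pt : ∀ f w, (if w ∈ A f then (1:ℕ) else 0) + (if f ∈ B w then 1 else 0)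
      ≤ (if w ∈ μ.fm f then 1 else 0) + (if w ∈ μ'.fm f then 1 else 0) := by
    intro f w
    by_cases h3 : w ∈ μ.fm f <;> by_cases h4 : w ∈ μ'.fm f
    · simp only [if_pos h3, if_pos h4]
      exact add_le_add rht_ite_one_le rht_ite_one_le
    · by_cases h1 : w ∈ A f
      · have h2 : f ∉ B w := fun hb => h4 (key f w h1 hb).2
        simp [h1, h2, h3, h4]
      · simp only [if_neg h1, if_pos h3, if_neg h4, zero_add, add_zero]
        exact rht_ite_one_le
    · by_cases h2 : f ∈ B w
      · have h1 : w ∉ A f := fun ha => h3 (key f w ha h2).1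
        simp [h1, h2, h3, h4]
      · simp only [if_neg h2, if_neg h3, if_pos h4, zero_add, add_zero]
        exact rht_ite_one_le
    · have h1 : w ∉ A f := fun h => by
        rcases Finset.mem_union.mp (hAsub f h) with h | h
        exacts [h3 h, h4 h]
      have h2 : f ∉ B w := fun h => by
        rcases Finset.mem_union.mp (hBsub w h) with h | h
        exacts [h3 ((μ.compat f w).mpr h), h4 ((μ'.compat f w).mpr h)]
      simp [h1, h2]
  -- switching sides preserves totals
  have swapμ : ∑ f : F, (μ.fm f).card = ∑ w : W, (μ.wm w).card := by
    simp only [rht_card_eq_sum_ite, μ.compat]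
    exact Finset.sum_comm
  have swapμ' : ∑ f : F, (μ'.fm f).card = ∑ w : W, (μ'.wm w).card := by
    simp only [rht_card_eq_sum_ite, μ'.compat]
    exact Finset.sum_comm
  -- the main counting inequality
  have main : (∑ f : F, (A f).card) + (∑ w : W, (B w).card)
      ≤ ∑ f : F, ((μ.fm f).card + (μ'.fm f).card) := by
    have e1 : ∑ w : W, (B w).card = ∑ f : F, ∑ w : W, (if f ∈ B w then (1:ℕ) else 0) := by
      simp only [rht_card_eq_sum_ite]
      exact Finset.sum_comm
    rw [e1]
    simp only [rht_card_eq_sum_ite]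
    rw [← Finset.sum_add_distrib]
    apply Finset.sum_le_sum
    intro f _
    rw [← Finset.sum_add_distrib, ← Finset.sum_add_distrib]
    exact Finset.sum_le_sum fun w _ => pt f w
  have hSA : ∑ f : F, ((μ.fm f).card + (μ'.fm f).card) ≤ ∑ f : F, 2 * (A f).card :=
    Finset.sum_le_sum fun f _ => by have := hA1 f; have := hA2 f; omega
  have hSB : ∑ w : W, ((μ.wm w).card + (μ'.wm w).card) ≤ ∑ w : W, 2 * (B w).card :=
    Finset.sum_le_sum fun w _ => by have := hB1 w; have := hB2 w; omega
  have etotF : ∑ f : F, ((μ.fm f).card + (μ'.fm f).card)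
      = (∑ f : F, (μ.fm f).card) + (∑ f : F, (μ'.fm f).card) := Finset.sum_add_distrib
  have etotW : ∑ w : W, ((μ.wm w).card + (μ'.wm w).card)
      = (∑ w : W, (μ.wm w).card) + (∑ w : W, (μ'.wm w).card) := Finset.sum_add_distrib
  have e2A : ∑ f : F, 2 * (A f).card = 2 * ∑ f : F, (A f).card := (Finset.mul_sum _ _ _).symm
  have e2B : ∑ w : W, 2 * (B w).card = 2 * ∑ w : W, (B w).card := (Finset.mul_sum _ _ _).symm
  -- conclude termwise equalities
  have eqF : ∑ f : F, ((μ.fm f).card + (μ'.fm f).card) = ∑ f : F, 2 * (A f).card := by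
    rw [etotF, e2A] at hSA ⊢
    rw [etotW, e2B, ← swapμ, ← swapμ'] at hSB
    rw [etotF] at main
    omega
  have eqW : ∑ w : W, ((μ.wm w).card + (μ'.wm w).card) = ∑ w : W, 2 * (B w).card := by
    rw [etotF, e2A] at hSA
    rw [etotW, e2B, ← swapμ, ← swapμ'] at hSB ⊢
    rw [etotF] at main
    omega
  have ptF := (Finset.sum_eq_sum_iff_of_le (fun f _ => by have := hA1 f; have := hA2 f; omega)).mp eqF
  have ptW := (Finset.sum_eq_sum_iff_of_le (fun w _ => by have := hB1 w; have := hB2 w; omega)).mp eqW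
  constructor
  · intro f
    have h := ptF f (Finset.mem_univ f)
    have := hA1 f; have := hA2 f
    omega
  · intro w
    have h := ptW w (Finset.mem_univ w)
    have := hB1 w; have := hB2 w
    omega
end

section
/- Consider a many-to-many matching market (F, W, ≻) in which every agent a's preference relation is a strict linear order over subsets of the other side that is substitutable and q_a-separable (for a profile of quotas q = (q_a)). If an agent a does not fill its quota at some stable matching μ, i.e. |μ(a)| < q_a, then a is matched to the same set of partners at every stable matching: μ'(a) = μ(a) for every stable matching μ'. -/
variable (F W : Type*) [DecidableEq F] [Fintype F] [DecidableEq W] [Fintype W]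

variable {F W}

section ChLemmas

namespace Pref

variable {α : Type*} [DecidableEq α] [Fintype α]

lemma ch_spec (p : Pref α) (S : Finset α) :
    p.Ch S ⊆ S ∧ ∀ T ⊆ S, T ≠ p.Ch S → p.gt (p.Ch S) T := by
  classical
  haveI := p.isSTO
  haveI : IsStrictTotalOrder (Finset α) (Function.swap p.gt) := IsStrictTotalOrder.swap _
  letI L : LinearOrder (Finset α) := linearOrderOfSTO (Function.swap p.gt)
  have hCh : p.Ch S = @Finset.max' _ L S.powerset ⟨∅, Finset.empty_mem_powerset S⟩ := rfl
  have hmem : p.Ch S ∈ S.powerset := by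
    rw [hCh]; exact Finset.max'_mem _ _
  have hle : ∀ T ∈ S.powerset, T = p.Ch S ∨ p.gt (p.Ch S) T := by
    intro T hT
    have := @Finset.le_max' _ L S.powerset T hT
    rw [← hCh] at this
    exact this
  exact ⟨Finset.mem_powerset.1 hmem, fun T hT hne =>
    ((hle T (Finset.mem_powerset.2 hT)).resolve_left hne)⟩

lemma ch_subset (p : Pref α) (S : Finset α) : p.Ch S ⊆ S := (p.ch_spec S).1

lemma ch_gt (p : Pref α) {S T : Finset α} (h : T ⊆ S) (hne : T ≠ p.Ch S) :
    p.gt (p.Ch S) T := (p.ch_spec S).2 T h hne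

lemma gt_asymm (p : Pref α) {A B : Finset α} (h : p.gt A B) : ¬ p.gt B A := by
  haveI := p.isSTO
  intro h'
  exact (p.isSTO.irrefl A) (p.isSTO.trans A B A h h')

lemma gt_trans (p : Pref α) {A B C : Finset α} (h : p.gt A B) (h' : p.gt B C) :
    p.gt A C := p.isSTO.trans A B C h h'

/-- key substitutability iteration -/
lemma mem_ch_of_subset (p : Pref α) (hp : p.Substitutable) :
    ∀ (S S' : Finset α) (w : α), S' ⊆ S → w ∈ S' → w ∈ p.Ch S → w ∈ p.Ch S' := by
  intro S
  induction S using Finset.strongInduction with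
  | _ S ih =>
    intro S' w hS' hwS' hwC
    rcases eq_or_ne S S' with rfl | hne
    · exact hwC
    · have : ∃ w' ∈ S, w' ∉ S' := by
        by_contra h
        push_neg at h
        exact hne (Finset.Subset.antisymm h hS')
      obtain ⟨w', hw'S, hw'S'⟩ := this
      have hww' : w ≠ w' := fun h => hw'S' (h ▸ hwS')
      have h1 : w ∈ p.Ch (S.erase w') :=
        hp S w w' (p.ch_subset S hwC) hw'S hww' hwC
      exact ih (S.erase w') (Finset.erase_ssubset hw'S) S' w
        (fun x hx => Finset.mem_erase.2 ⟨fun h => hw'S' (h ▸ hx), hS' hx⟩) hwS' h1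

lemma accept_of_mem_ch (p : Pref α) (hp : p.Substitutable) {S : Finset α} {w : α}
    (h : w ∈ p.Ch S) : p.gt {w} ∅ := by
  have hwS : w ∈ S := p.ch_subset S h
  have h1 : w ∈ p.Ch {w} :=
    p.mem_ch_of_subset hp S {w} w (Finset.singleton_subset_iff.2 hwS)
      (Finset.mem_singleton_self w) h
  have h2 : p.Ch {w} = {w} :=
    Finset.Subset.antisymm (p.ch_subset _) (Finset.singleton_subset_iff.2 h1)
  have h3 : (∅ : Finset α) ≠ p.Ch {w} := by
    rw [h2]; exact fun h => (Finset.singleton_ne_empty w) h.symm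
  have := p.ch_gt (Finset.empty_subset {w}) h3
  rwa [h2] at this

lemma card_le_of_ch_eq (p : Pref α) {q : ℕ} (hq : p.QSeparable q) {S : Finset α}
    (h : p.Ch S = S) : S.card ≤ q := by
  by_contra hlt
  push_neg at hlt
  have h1 : p.gt ∅ S := hq.1 S hlt
  have hne : S ≠ ∅ := by
    intro h'
    rw [h'] at hlt; simp at hlt
  have h2 : p.gt S ∅ := by
    have := p.ch_gt (Finset.empty_subset S) (by rw [h]; exact Ne.symm hne)
    rwa [h] at this
  exact p.gt_asymm h1 h2

lemma gt_of_ssubset (p : Pref α) {q : ℕ} (hq : p.QSeparable q) {S : Finset α}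
    (hA : ∀ v ∈ S, p.gt {v} ∅) (hcard : S.card ≤ q) :
    ∀ T : Finset α, T ⊂ S → p.gt S T := by
  intro T hT
  -- induction on card (S \ T)
  have hgen : ∀ n : ℕ, ∀ T : Finset α, T ⊂ S → (S \ T).card = n → p.gt S T := by
    intro n
    induction n with
    | zero =>
      intro T hT h0
      exfalso
      have : S \ T = ∅ := Finset.card_eq_zero.1 h0
      have hST : S \ T = ∅ := Finset.card_eq_zero.1 h0
      have hsub2 : S ⊆ T := by
        intro x hx
        by_contra hxT
        have hx2 : x ∈ S \ T := Finset.mem_sdiff.2 ⟨hx, hxT⟩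
        rw [hST] at hx2
        exact absurd hx2 (Finset.notMem_empty x)
      exact (hT.2 hsub2).elim
    | succ n ihn =>
      intro T hT hcardn
      have hTS : T ⊆ S := hT.1
      have : (S \ T).Nonempty := by
        rw [← Finset.card_pos, hcardn]; omega
      obtain ⟨v, hv⟩ := this
      have hvS : v ∈ S := (Finset.mem_sdiff.1 hv).1
      have hvT : v ∉ T := (Finset.mem_sdiff.1 hv).2
      have hTcard : T.card < q := by
        have := Finset.card_lt_card hT
        omega
      have hstep : p.gt (insert v T) T :=
        (hq.2 T v hvT hTcard).2 (hA v hvS)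
      rcases eq_or_ne (insert v T) S with heq | hne
      · rwa [← heq]
      · have hsub : insert v T ⊆ S := Finset.insert_subset hvS hTS
        have hss : insert v T ⊂ S := Finset.ssubset_iff_subset_ne.2 ⟨hsub, hne⟩
        have hcard' : (S \ insert v T).card = n := by
          have : S \ insert v T = (S \ T).erase v := by
            ext x
            simp [Finset.mem_sdiff, Finset.mem_erase, Finset.mem_insert]
            tauto
          rw [this, Finset.card_erase_of_mem hv, hcardn]
          omega
        exact p.gt_trans (ihn (insert v T) hss hcard') hstep
  exact hgen (S \ T).card T hT rfl

lemma ch_eq_self (p : Pref α) {q : ℕ} (hq : p.QSeparable q) {S : Finset α}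
    (hA : ∀ v ∈ S, p.gt {v} ∅) (hcard : S.card ≤ q) : p.Ch S = S := by
  by_contra h
  have h1 : p.gt (p.Ch S) S := p.ch_gt (subset_refl S) (Ne.symm h)
  have h2 : p.gt S (p.Ch S) := p.gt_of_ssubset hq hA hcard (p.Ch S)
    (Finset.ssubset_iff_subset_ne.2 ⟨p.ch_subset S, h⟩)
  exact p.gt_asymm h1 h2

lemma ch_card (p : Pref α) {q : ℕ} (hq : p.QSeparable q) {S : Finset α}
    (hA : ∀ v ∈ S, p.gt {v} ∅) : (p.Ch S).card = min S.card q := by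
  rcases le_or_gt S.card q with h | h
  · rw [p.ch_eq_self hq hA h, min_eq_left h]
  · rw [min_eq_right h.le]
    have hle : (p.Ch S).card ≤ q := by
      by_contra hgt
      push_neg at hgt
      have h1 : p.gt ∅ (p.Ch S) := hq.1 _ hgt
      have hne : (∅ : Finset α) ≠ p.Ch S := by
        intro heq
        rw [← heq] at hgt; simp at hgt
      have h2 : p.gt (p.Ch S) ∅ := p.ch_gt (Finset.empty_subset S) hne
      exact p.gt_asymm h1 h2
    rcases lt_or_eq_of_le hle with hlt | heq
    · exfalso
      have hne : p.Ch S ≠ S := by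
        intro heq
        rw [heq] at hlt; omega
      have : ∃ v ∈ S, v ∉ p.Ch S := by
        by_contra hc
        push_neg at hc
        exact hne (Finset.Subset.antisymm (p.ch_subset S) hc)
      obtain ⟨v, hvS, hvC⟩ := this
      have hstep : p.gt (insert v (p.Ch S)) (p.Ch S) :=
        (hq.2 (p.Ch S) v hvC hlt).2 (hA v hvS)
      have hsub : insert v (p.Ch S) ⊆ S := Finset.insert_subset hvS (p.ch_subset S)
      have hne2 : insert v (p.Ch S) ≠ p.Ch S := by
        intro heq
        exact hvC (heq ▸ Finset.mem_insert_self v _)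
      exact p.gt_asymm (p.ch_gt hsub hne2) hstep
    · exact heq

end Pref

end ChLemmas

section MarketLemmas

open Finset

variable {F W : Type*} [DecidableEq F] [Fintype F] [DecidableEq W] [Fintype W]

/-- Swap the two sides of a matching. -/
def MSwap (μ : Matching F W) : Matching W F :=
  ⟨μ.wm, μ.fm, fun w f => (μ.compat f w).symm⟩

@[simp] lemma MSwap_fm (μ : Matching F W) : (MSwap μ).fm = μ.wm := rfl
@[simp] lemma MSwap_wm (μ : Matching F W) : (MSwap μ).wm = μ.fm := rfl

/-- Swap the two sides of a profile. -/
def PSwap (P : Profile F W) : Profile W F := ⟨P.wp, P.fp⟩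

@[simp] lemma PSwap_fp (P : Profile F W) : (PSwap P).fp = P.wp := rfl
@[simp] lemma PSwap_wp (P : Profile F W) : (PSwap P).wp = P.fp := rfl

lemma stable_swap {P : Profile F W} {μ : Matching F W} (hμ : Stable P μ) :
    Stable (PSwap P) (MSwap μ) := by
  refine ⟨⟨hμ.1.2, hμ.1.1⟩, ?_⟩
  intro a b hb
  obtain ⟨h1, h2, h3⟩ := hb
  exact hμ.2 b a ⟨fun h => h1 ((μ.compat a b).1 h), h3, h2⟩

lemma sub_swap {P : Profile F W} (h : P.Substitutable) :
    (PSwap P).Substitutable := ⟨h.2, h.1⟩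

/-- The set of rejected partners from the union of two matchings. -/
noncomputable def Rset (P : Profile F W) (μ μ' : Matching F W) (f : F) : Finset W :=
  (μ.fm f ∪ μ'.fm f) \ (P.fp f).Ch (μ.fm f ∪ μ'.fm f)

/-- The symmetric difference of two matchings at an agent. -/
def Dset (μ μ' : Matching F W) (f : F) : Finset W :=
  (μ.fm f \ μ'.fm f) ∪ (μ'.fm f \ μ.fm f)

lemma stable_acc {P : Profile F W} (hsub : P.Substitutable) {μ : Matching F W}
    (hμ : Stable P μ) (f : F) {w : W} (hw : w ∈ μ.fm f) : (P.fp f).gt {w} ∅ := by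
  refine (P.fp f).accept_of_mem_ch (hsub.1 f) (S := μ.fm f) ?_
  rw [hμ.1.1 f]; exact hw

lemma stable_card {P : Profile F W} {qf : F → ℕ}
    (hsepf : ∀ f, (P.fp f).QSeparable (qf f)) {μ : Matching F W}
    (hμ : Stable P μ) (f : F) : (μ.fm f).card ≤ qf f :=
  (P.fp f).card_le_of_ch_eq (hsepf f) (hμ.1.1 f)

/-- The key stability lemma: if `f`'s choice from the union keeps `w ∉ ν(f)`,
then `w`'s choice from the union rejects `f`. -/
lemma dagger {P : Profile F W} (hsub : P.Substitutable) {ν ρ : Matching F W}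
    (hν : Stable P ν) {f : F} {w : W}
    (hC : w ∈ (P.fp f).Ch (ν.fm f ∪ ρ.fm f)) (hnm : w ∉ ν.fm f) :
    f ∉ (P.wp w).Ch (ν.wm w ∪ ρ.wm w) := by
  have hwU : w ∈ ν.fm f ∪ ρ.fm f := (P.fp f).ch_subset _ hC
  have hwρ : w ∈ ρ.fm f := (Finset.mem_union.1 hwU).resolve_left hnm
  have h1 : w ∈ (P.fp f).Ch (insert w (ν.fm f)) :=
    (P.fp f).mem_ch_of_subset (hsub.1 f) _ _ w
      (Finset.insert_subset hwU Finset.subset_union_left)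
      (Finset.mem_insert_self w _) hC
  intro hCw
  have h2 : f ∈ (P.wp w).Ch (insert f (ν.wm w)) :=
    (P.wp w).mem_ch_of_subset (hsub.2 w) _ _ f
      (Finset.insert_subset
        (Finset.mem_union_right _ ((ρ.compat f w).1 hwρ)) Finset.subset_union_left)
      (Finset.mem_insert_self f _) hCw
  exact hν.2 w f ⟨hnm, h1, h2⟩

lemma edge {P : Profile F W} (hsub : P.Substitutable) {μ μ' : Matching F W}
    (hμ : Stable P μ) (hμ' : Stable P μ') (f : F) (w : W)
    (hw : w ∈ Dset μ μ' f) :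
    w ∈ Rset P μ μ' f ∨ f ∈ Rset (PSwap P) (MSwap μ) (MSwap μ') w := by
  have hwU : w ∈ μ.fm f ∪ μ'.fm f := by
    rcases Finset.mem_union.1 hw with h | h
    · exact Finset.mem_union_left _ (Finset.mem_sdiff.1 h).1
    · exact Finset.mem_union_right _ (Finset.mem_sdiff.1 h).1
  by_cases hR : w ∈ (P.fp f).Ch (μ.fm f ∪ μ'.fm f)
  · right
    rcases Finset.mem_union.1 hw with h | h
    · -- w ∈ μ \ μ' : use stability of μ'
      obtain ⟨hw1, hw2⟩ := Finset.mem_sdiff.1 h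
      have hC' : w ∈ (P.fp f).Ch (μ'.fm f ∪ μ.fm f) := by rwa [Finset.union_comm]
      have := dagger hsub hμ' hC' hw2
      rw [Finset.union_comm] at this
      refine Finset.mem_sdiff.2 ⟨?_, ?_⟩
      · exact Finset.mem_union_left _ ((μ.compat f w).1 hw1)
      · simpa [Rset] using this
    · -- w ∈ μ' \ μ : use stability of μ
      obtain ⟨hw1, hw2⟩ := Finset.mem_sdiff.1 h
      have := dagger hsub hμ hR hw2
      refine Finset.mem_sdiff.2 ⟨?_, ?_⟩
      · exact Finset.mem_union_right _ ((μ'.compat f w).1 hw1)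
      · simpa [Rset] using this
  · left
    exact Finset.mem_sdiff.2 ⟨hwU, hR⟩

lemma two_R_le_D {P : Profile F W} (hsub : P.Substitutable) {qf : F → ℕ}
    (hsepf : ∀ f, (P.fp f).QSeparable (qf f)) {μ μ' : Matching F W}
    (hμ : Stable P μ) (hμ' : Stable P μ') (f : F) :
    2 * (Rset P μ μ' f).card ≤ (Dset μ μ' f).card := by
  have hacc : ∀ v ∈ μ.fm f ∪ μ'.fm f, (P.fp f).gt {v} ∅ := by
    intro v hv
    rcases Finset.mem_union.1 hv with h | h
    · exact stable_acc hsub hμ f h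
    · exact stable_acc hsub hμ' f h
  have hch : ((P.fp f).Ch (μ.fm f ∪ μ'.fm f)).card = min (μ.fm f ∪ μ'.fm f).card (qf f) :=
    (P.fp f).ch_card (hsepf f) hacc
  have hR : (Rset P μ μ' f).card
      = (μ.fm f ∪ μ'.fm f).card - min (μ.fm f ∪ μ'.fm f).card (qf f) := by
    rw [Rset, Finset.card_sdiff_of_subset ((P.fp f).ch_subset _), hch]
  have hU1 : (μ'.fm f \ μ.fm f).card + (μ.fm f).card = (μ.fm f ∪ μ'.fm f).card := by
    rw [Finset.union_comm]; exact Finset.card_sdiff_add_card _ _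
  have hU2 : (μ.fm f \ μ'.fm f).card + (μ'.fm f).card = (μ.fm f ∪ μ'.fm f).card :=
    Finset.card_sdiff_add_card _ _
  have hD : (Dset μ μ' f).card = (μ.fm f \ μ'.fm f).card + (μ'.fm f \ μ.fm f).card := by
    rw [Dset, Finset.card_union_of_disjoint disjoint_sdiff_sdiff]
  have hm : (μ.fm f).card ≤ qf f := stable_card hsepf hμ f
  have hm' : (μ'.fm f).card ≤ qf f := stable_card hsepf hμ' f
  rcases le_total (μ.fm f ∪ μ'.fm f).card (qf f) with h | h
  · rw [min_eq_left h] at hR; omega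
  · rw [min_eq_right h] at hR; omega

lemma sum_card_eq (A : F → Finset W) (B : W → Finset F)
    (h : ∀ f w, w ∈ A f ↔ f ∈ B w) :
    ∑ f, (A f).card = ∑ w, (B w).card := by
  classical
  have hA : ∀ f, (A f).card = ∑ w, if w ∈ A f then 1 else 0 := by
    intro f
    rw [Finset.sum_ite_mem, Finset.univ_inter, Finset.sum_const, smul_eq_mul, mul_one]
  have hB : ∀ w, (B w).card = ∑ f, if f ∈ B w then 1 else 0 := by
    intro w
    rw [Finset.sum_ite_mem, Finset.univ_inter, Finset.sum_const, smul_eq_mul, mul_one]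
  simp_rw [hA, hB]
  rw [Finset.sum_comm]
  congr 1
  ext w
  congr 1
  ext f
  simp [h f w]

end MarketLemmas

lemma main_aux {F W : Type*} [DecidableEq F] [Fintype F] [DecidableEq W] [Fintype W]
    (P : Profile F W) (hsub : P.Substitutable)
    (qf : F → ℕ) (qw : W → ℕ)
    (hsepf : ∀ f, (P.fp f).QSeparable (qf f)) (hsepw : ∀ w, (P.wp w).QSeparable (qw w))
    (μ μ' : Matching F W) (hμ : Stable P μ) (hμ' : Stable P μ')
    (f₀ : F) (hlt : (μ.fm f₀).card < qf f₀) : μ'.fm f₀ = μ.fm f₀ := by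
  classical
  have hsubs := sub_swap hsub
  have hμs := stable_swap hμ
  have hμ's := stable_swap hμ'
  have hcompatD : ∀ (f : F) (w : W),
      w ∈ Dset μ μ' f ↔ f ∈ Dset (MSwap μ) (MSwap μ') w := by
    intro f w
    simp only [Dset, MSwap_fm, Finset.mem_union, Finset.mem_sdiff, μ.compat, μ'.compat]
  -- double counting of the symmetric-difference edges
  have e0 : ∑ f, (Dset μ μ' f).card = ∑ w, (Dset (MSwap μ) (MSwap μ') w).card :=
    sum_card_eq _ _ hcompatD
  have eA : ∑ f, ((Dset μ μ' f).filter
        (fun w => f ∈ Rset (PSwap P) (MSwap μ) (MSwap μ') w)).card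
      = ∑ w, (Dset (MSwap μ) (MSwap μ') w ∩ Rset (PSwap P) (MSwap μ) (MSwap μ') w).card := by
    refine sum_card_eq _ _ ?_
    intro f w
    simp only [Finset.mem_filter, Finset.mem_inter, hcompatD f w]
  have e1 : ∀ f, (Dset μ μ' f).card ≤ (Rset P μ μ' f).card +
      ((Dset μ μ' f).filter (fun w => f ∈ Rset (PSwap P) (MSwap μ) (MSwap μ') w)).card := by
    intro f
    have hsubE : Dset μ μ' f ⊆ Rset P μ μ' f ∪
        (Dset μ μ' f).filter (fun w => f ∈ Rset (PSwap P) (MSwap μ) (MSwap μ') w) := by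
      intro w hw
      rcases edge hsub hμ hμ' f w hw with h | h
      · exact Finset.mem_union_left _ h
      · exact Finset.mem_union_right _ (Finset.mem_filter.2 ⟨hw, h⟩)
    exact le_trans (Finset.card_le_card hsubE) (Finset.card_union_le _ _)
  have e2 : ∀ f, 2 * (Rset P μ μ' f).card ≤ (Dset μ μ' f).card :=
    two_R_le_D hsub hsepf hμ hμ'
  have e3 : ∀ w, 2 * (Rset (PSwap P) (MSwap μ) (MSwap μ') w).card ≤
      (Dset (MSwap μ) (MSwap μ') w).card :=
    two_R_le_D hsubs hsepw hμs hμ's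
  have s1 : ∑ f, (Dset μ μ' f).card ≤ ∑ f, (Rset P μ μ' f).card +
      ∑ f, ((Dset μ μ' f).filter
        (fun w => f ∈ Rset (PSwap P) (MSwap μ) (MSwap μ') w)).card := by
    rw [← Finset.sum_add_distrib]
    exact Finset.sum_le_sum (fun f _ => e1 f)
  have s2 : ∑ w, (Dset (MSwap μ) (MSwap μ') w ∩ Rset (PSwap P) (MSwap μ) (MSwap μ') w).card
      ≤ ∑ w, (Rset (PSwap P) (MSwap μ) (MSwap μ') w).card :=
    Finset.sum_le_sum (fun w _ => Finset.card_le_card Finset.inter_subset_right)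
  have s3 : 2 * ∑ f, (Rset P μ μ' f).card ≤ ∑ f, (Dset μ μ' f).card := by
    rw [Finset.mul_sum]
    exact Finset.sum_le_sum (fun f _ => e2 f)
  have s4 : 2 * ∑ w, (Rset (PSwap P) (MSwap μ) (MSwap μ') w).card ≤
      ∑ w, (Dset (MSwap μ) (MSwap μ') w).card := by
    rw [Finset.mul_sum]
    exact Finset.sum_le_sum (fun w _ => e3 w)
  have hX : ∑ f, 2 * (Rset P μ μ' f).card = ∑ f, (Dset μ μ' f).card := by
    rw [← Finset.mul_sum]
    omega
  have hterm : ∀ f ∈ Finset.univ, 2 * (Rset P μ μ' f).card = (Dset μ μ' f).card :=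
    (Finset.sum_eq_sum_iff_of_le (fun f _ => e2 f)).1 hX
  have heq : 2 * (Rset P μ μ' f₀).card = (Dset μ μ' f₀).card :=
    hterm f₀ (Finset.mem_univ f₀)
  -- extract the conclusion at f₀
  have hacc : ∀ v ∈ μ.fm f₀ ∪ μ'.fm f₀, (P.fp f₀).gt {v} ∅ := by
    intro v hv
    rcases Finset.mem_union.1 hv with h | h
    · exact stable_acc hsub hμ f₀ h
    · exact stable_acc hsub hμ' f₀ h
  have hch : ((P.fp f₀).Ch (μ.fm f₀ ∪ μ'.fm f₀)).card
      = min (μ.fm f₀ ∪ μ'.fm f₀).card (qf f₀) := (P.fp f₀).ch_card (hsepf f₀) hacc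
  have hR : (Rset P μ μ' f₀).card
      = (μ.fm f₀ ∪ μ'.fm f₀).card - min (μ.fm f₀ ∪ μ'.fm f₀).card (qf f₀) := by
    rw [Rset, Finset.card_sdiff_of_subset ((P.fp f₀).ch_subset _), hch]
  have hU1 : (μ'.fm f₀ \ μ.fm f₀).card + (μ.fm f₀).card = (μ.fm f₀ ∪ μ'.fm f₀).card := by
    rw [Finset.union_comm]; exact Finset.card_sdiff_add_card _ _
  have hU2 : (μ.fm f₀ \ μ'.fm f₀).card + (μ'.fm f₀).card = (μ.fm f₀ ∪ μ'.fm f₀).card :=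
    Finset.card_sdiff_add_card _ _
  have hD : (Dset μ μ' f₀).card
      = (μ.fm f₀ \ μ'.fm f₀).card + (μ'.fm f₀ \ μ.fm f₀).card := by
    rw [Dset, Finset.card_union_of_disjoint disjoint_sdiff_sdiff]
  have hm' : (μ'.fm f₀).card ≤ qf f₀ := stable_card hsepf hμ' f₀
  have hzero : (μ.fm f₀ \ μ'.fm f₀).card = 0 ∧ (μ'.fm f₀ \ μ.fm f₀).card = 0 := by
    rcases le_total (μ.fm f₀ ∪ μ'.fm f₀).card (qf f₀) with h | h
    · rw [min_eq_left h] at hR; omega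
    · rw [min_eq_right h] at hR; omega
  have h1 : μ.fm f₀ ⊆ μ'.fm f₀ :=
    Finset.sdiff_eq_empty_iff_subset.1 (Finset.card_eq_zero.1 hzero.1)
  have h2 : μ'.fm f₀ ⊆ μ.fm f₀ :=
    Finset.sdiff_eq_empty_iff_subset.1 (Finset.card_eq_zero.1 hzero.2)
  exact Finset.Subset.antisymm h2 h1

/-- Klijn–Yazıcı 2011.  In a many-to-many matching market in which
every agent's preference is substitutable and `q_a`-separable, if an agent does not
fill its quota at some stable matching `μ`, then it is matched to the same set of
partners at every stable matching. -/
theorem stmt1 {F W : Type*} [DecidableEq F] [Fintype F] [DecidableEq W] [Fintype W]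
    (P : Profile F W) (hsub : P.Substitutable)
    (qf : F → ℕ) (qw : W → ℕ) (hqf : ∀ f, 0 < qf f) (hqw : ∀ w, 0 < qw w)
    (hsepf : ∀ f, (P.fp f).QSeparable (qf f)) (hsepw : ∀ w, (P.wp w).QSeparable (qw w))
    (μ : Matching F W) (hμ : Stable P μ) :
    (∀ f : F, (μ.fm f).card < qf f → ∀ μ' : Matching F W, Stable P μ' → μ'.fm f = μ.fm f) ∧
    (∀ w : W, (μ.wm w).card < qw w → ∀ μ' : Matching F W, Stable P μ' → μ'.wm w = μ.wm w) := by
  constructor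
  · intro f h μ' hμ''
    exact main_aux P hsub qf qw hsepf hsepw μ μ' hμ hμ'' f h
  · intro w h μ' hμ''
    exact main_aux (PSwap P) (sub_swap hsub) qw qf hsepw hsepf (MSwap μ) (MSwap μ')
      (stable_swap hμ) (stable_swap hμ'') w h
end

section
/- Let (F, W, ≻) be a many-to-many matching market with strict preferences, let f ∈ F be a firm, and let μ be a stable matching for (F, W, ≻). Define ≻''_f = ≻_f |_{μ(f)}, the preference ≻_f restricted to μ(f), and let ≻'' = (≻_{-f}, ≻''_f) be the profile obtained from ≻ by replacing ≻_f with ≻''_f. Then μ is a stable matching for (F, W, ≻''). -/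
variable (F W : Type*) [DecidableEq F] [Fintype F] [DecidableEq W] [Fintype W]

variable {F W}

lemma Pref.Ch_spec {α : Type*} [DecidableEq α] [Fintype α] (p : Pref α) (S : Finset α) :
    p.Ch S ⊆ S ∧ ∀ T ⊆ S, T = p.Ch S ∨ p.gt (p.Ch S) T := by
  classical
  haveI := p.isSTO
  haveI : IsStrictTotalOrder (Finset α) (Function.swap p.gt) := IsStrictTotalOrder.swap _
  unfold Pref.Ch
  constructor
  · have := @Finset.max'_mem _ (linearOrderOfSTO (Function.swap p.gt)) S.powerset
      ⟨∅, Finset.empty_mem_powerset S⟩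
    simpa [Finset.mem_powerset] using this
  · intro T hT
    have := @Finset.le_max' _ (linearOrderOfSTO (Function.swap p.gt)) S.powerset T
      (Finset.mem_powerset.2 hT)
    exact this.imp id (fun h => h)

lemma Pref.gt_asymm_s2 {α : Type*} [DecidableEq α] [Fintype α] (p : Pref α)
    {a b : Finset α} (h : p.gt a b) : ¬ p.gt b a := by
  haveI := p.isSTO
  exact asymm h

lemma Pref.gt_irrefl {α : Type*} [DecidableEq α] [Fintype α] (p : Pref α)
    (a : Finset α) : ¬ p.gt a a := by
  haveI := p.isSTO
  exact irrefl a

/-- Lemma 1 of the paper.  If `μ` is stable for `(F, W, ≻)`,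
`f` is a firm, and `≻'' = (≻_{-f}, ≻_f|_{μ(f)})` is the profile in which firm `f`'s
preference is replaced by its restriction to `μ(f)`, then `μ` is stable for
`(F, W, ≻'')`. -/
theorem stmt2 {F W : Type*} [DecidableEq F] [Fintype F] [DecidableEq W] [Fintype W]
    (P : Profile F W) (f : F) (μ : Matching F W) (hμ : Stable P μ)
    (p'' : Pref W) (hres : IsRestriction (P.fp f) (μ.fm f) p'') :
    Stable (P.updateFirm f p'') μ := by
  classical
  obtain ⟨⟨hIRf, hIRw⟩, hNB⟩ := hμ
  set M := μ.fm f with hM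
  constructor
  · constructor
    · intro f'
      by_cases hf : f' = f
      · subst hf
        simp only [Profile.updateFirm, Function.update_self]
        -- show p''.Ch M = M
        obtain ⟨hsub, hmax⟩ := p''.Ch_spec M
        rcases hmax M (subset_refl M) with h | h
        · exact h.symm
        · by_cases heq : p''.Ch M = M
          · exact heq
          · exfalso
            have hpgt : (P.fp f').gt (p''.Ch M) M :=
              (hres.2.2 _ _ hsub (subset_refl M)).1 h
            obtain ⟨_, hmaxp⟩ := (P.fp f').Ch_spec M
            rcases hmaxp (p''.Ch M) hsub with h2 | h2
            · rw [h2, hIRf f'] at heq; exact heq rfl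
            · rw [hIRf f'] at h2
              exact (P.fp f').gt_asymm_s2 hpgt h2
      · simpa only [Profile.updateFirm, Function.update_of_ne hf] using hIRf f'
    · intro w
      simpa only [Profile.updateFirm] using hIRw w
  · intro w f' hB
    by_cases hf : f' = f
    · subst hf
      obtain ⟨hwM, hwCh, _⟩ := hB
      simp only [Profile.updateFirm, Function.update_self] at hwCh
      obtain ⟨hsub, hmax⟩ := p''.Ch_spec (insert w M)
      set C := p''.Ch (insert w M) with hC
      have hnsub : ¬ C ⊆ M := fun h => hwM (h hwCh)
      have h1 : p''.gt ∅ C := hres.1 C hnsub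
      rcases hmax ∅ (Finset.empty_subset _) with h2 | h2
      · rw [← h2] at hwCh; exact absurd hwCh (Finset.notMem_empty w)
      · exact p''.gt_asymm_s2 h1 h2
    · apply hNB w f'
      obtain ⟨h1, h2, h3⟩ := hB
      simp only [Profile.updateFirm, Function.update_of_ne hf] at h2 h3
      exact ⟨h1, h2, h3⟩
end
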